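/- Let X_A, Z_A be Hermitian matrices on ℂ^{d_A} with pairwise distinct nonzero eigenvalues α_i (resp. γ_i) and orthonormal eigenbases {x_i^A} (resp. {z_i^A}), and let X_B, Z_B be Hermitian matrices on ℂ^{d_B} with pairwise distinct nonzero eigenvalues β_j (resp. δ_j) and orthonormal eigenbases {x_j^B} (resp. {z_j^B}). Then for all density matrices ρ_A on ℂ^{d_A} and ρ_B on ℂ^{d_B}, the direct sum of the grouped joint distribution of ρ_A ⊗ ρ_B in {x_i^A ⊗ x_j^B} (grouped by values of α_i β_j) and the grouped joint distribution of ρ_A ⊗ ρ_B in {z_i^A ⊗ z_j^B} (grouped by values of γ_i δ_j) is majorized by p(x^A|ρ_A) ⊕ p(z^A|ρ_A). -/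

import Mathlib

open Matrix
open scoped Kronecker ComplexOrder

noncomputable section

/-- Sum of the `k` largest entries of `v` (zero-padding implicit for nonneg vectors):
the maximum of `∑ i ∈ s, v i` over subsets `s` of cardinality at most `k`. -/
def topSum {ι : Type*} [Fintype ι] (v : ι → ℝ) (k : ℕ) : ℝ :=
  (Finset.univ.powerset.filter fun s => s.card ≤ k).sup' ⟨∅, by simp⟩ fun s => ∑ i ∈ s, v i

/-- `v ≺ w` (majorization, with implicit zero padding): every partial sum of the `k` largest
entries of `v` is at most that of `w`, and the total sums are equal. -/
def Majorizes {ι κ : Type*} [Fintype ι] [Fintype κ] (v : ι → ℝ) (w : κ → ℝ) : Prop :=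
  (∀ k : ℕ, topSum v k ≤ topSum w k) ∧ (∑ i, v i = ∑ j, w j)

/-- The operator norm (largest singular value) of a complex matrix. -/
def opNorm {m n : Type*} [Fintype m] [Fintype n] [DecidableEq n] (M : Matrix m n ℂ) : ℝ :=
  ‖LinearMap.toContinuousLinearMap (Matrix.toEuclideanLin M)‖

/-- `sCoef U k = s_k`: the maximum operator norm over all submatrices of `U` of class `k`,
i.e. obtained by selecting nonempty row/column sets `R`, `C` with `|R| + |C| = k + 1`. -/
def sCoef {d : ℕ} (U : Matrix (Fin d) (Fin d) ℂ) (k : ℕ) : ℝ :=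
  sSup { r : ℝ | ∃ R C : Finset (Fin d), R.Nonempty ∧ C.Nonempty ∧ R.card + C.card = k + 1 ∧
    r = opNorm (U.submatrix (fun i : {i // i ∈ R} => (i : Fin d))
                            (fun j : {j // j ∈ C} => (j : Fin d))) }

/-- The bound vector `ω^{X⊕Z} = (1, s_1, s_2 - s_1, …, s_d - s_{d-1}, 0, …, 0) ∈ ℝ^{2d}`.
(Note `sCoef U 0 = sSup ∅ = 0`, so the entry at index `1` is `s_1`.) -/
def omegaDS {d : ℕ} (U : Matrix (Fin d) (Fin d) ℂ) : Fin (2 * d) → ℝ := fun i =>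
  if (i : ℕ) = 0 then 1
  else if (i : ℕ) ≤ d then sCoef U (i : ℕ) - sCoef U ((i : ℕ) - 1)
  else 0

/-- A density matrix: positive semidefinite with unit trace. -/
def IsDensityMatrix {n : Type*} [Fintype n] (ρ : Matrix n n ℂ) : Prop :=
  ρ.PosSemidef ∧ ρ.trace = 1

/-- A family of vectors forming an orthonormal basis of `ℂ^d` (w.r.t. `⟨u, v⟩ = star u ⬝ᵥ v`). -/
def OrthonormalBasisVecs {d : ℕ} (x : Fin d → Fin d → ℂ) : Prop :=
  ∀ i j, star (x i) ⬝ᵥ x j = if i = j then 1 else 0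

/-- Measurement distribution of a density matrix `ρ` in the basis `x`: `p i = ⟨x i, ρ (x i)⟩`. -/
def measDist {d : ℕ} (x : Fin d → Fin d → ℂ) (ρ : Matrix (Fin d) (Fin d) ℂ) : Fin d → ℝ :=
  fun i => (star (x i) ⬝ᵥ (ρ *ᵥ x i)).re

/-- The tensor product of vectors. -/
def tensorVec {dA dB : ℕ} (u : Fin dA → ℂ) (v : Fin dB → ℂ) : Fin dA × Fin dB → ℂ :=
  fun ab => u ab.1 * v ab.2

/-- Joint measurement distribution of a bipartite density matrix `ρ` in the product basis
`{xA i ⊗ xB j}`: `p (i,j) = ⟨xA i ⊗ xB j, ρ (xA i ⊗ xB j)⟩`. -/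
def jointDist {dA dB : ℕ} (xA : Fin dA → Fin dA → ℂ) (xB : Fin dB → Fin dB → ℂ)
    (ρ : Matrix (Fin dA × Fin dB) (Fin dA × Fin dB) ℂ) : Fin dA × Fin dB → ℝ :=
  fun ij => (star (tensorVec (xA ij.1) (xB ij.2)) ⬝ᵥ (ρ *ᵥ tensorVec (xA ij.1) (xB ij.2))).re

open scoped Classical in
/-- The finite set of distinct values of the products `α i * β j`. -/
def valueSet {dA dB : ℕ} (α : Fin dA → ℝ) (β : Fin dB → ℝ) : Finset ℝ :=
  Finset.image (fun ij : Fin dA × Fin dB => α ij.1 * β ij.2) Finset.univ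

open scoped Classical in
/-- The grouped distribution of a joint distribution `p`, indexed by the distinct values `l`
of the products `α i * β j`, with entries `∑_{(i,j) : α i * β j = l} p (i,j)`. -/
def groupedDist {dA dB : ℕ} (α : Fin dA → ℝ) (β : Fin dB → ℝ)
    (p : Fin dA × Fin dB → ℝ) : valueSet α β → ℝ :=
  fun l => ∑ ij ∈ Finset.univ.filter (fun ij : Fin dA × Fin dB => α ij.1 * β ij.2 = (l : ℝ)), p ij

/-- Separability: `ρ` is a finite convex combination of tensor products of density matrices. -/
def IsSeparableState {dA dB : ℕ} (ρ : Matrix (Fin dA × Fin dB) (Fin dA × Fin dB) ℂ) : Prop :=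
  ∃ (K : ℕ) (lam : Fin K → ℝ) (σ : Fin K → Matrix (Fin dA) (Fin dA) ℂ)
    (τ : Fin K → Matrix (Fin dB) (Fin dB) ℂ),
    (∀ k, 0 ≤ lam k) ∧ (∑ k, lam k = 1) ∧
    (∀ k, IsDensityMatrix (σ k)) ∧ (∀ k, IsDensityMatrix (τ k)) ∧
    ρ = ∑ k, (lam k : ℂ) • (σ k ⊗ₖ τ k)


/-! For a product state the joint distribution is `pA i * pB j`. For fixed `j` the products
`α i * β j` are pairwise distinct, so `k` groups collect at most `k` entries of `pA` from each
column `j`; averaging over the probability vector `pB` therefore bounds the mass of any `k` groups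
by the sum of the `k` largest entries of `pA`. Top-`k` sums of a direct sum are controlled by the
top sums of the two summands, which combines the two bases. -/

section TopSum

variable {ι κ ι' κ' : Type*} [Fintype ι] [Fintype κ] [Fintype ι'] [Fintype κ']

lemma sum_le_topSum (v : ι → ℝ) {s : Finset ι} {k : ℕ} (h : s.card ≤ k) :
    ∑ i ∈ s, v i ≤ topSum v k :=
  Finset.le_sup' (fun t => ∑ i ∈ t, v i) (by simp [h])

lemma topSum_le {v : ι → ℝ} {k : ℕ} {b : ℝ}
    (h : ∀ s : Finset ι, s.card ≤ k → ∑ i ∈ s, v i ≤ b) : topSum v k ≤ b :=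
  Finset.sup'_le _ _ fun s hs => h s (by simpa using hs)

lemma exists_sum_eq_topSum (v : ι → ℝ) (k : ℕ) :
    ∃ s : Finset ι, s.card ≤ k ∧ ∑ i ∈ s, v i = topSum v k := by
  obtain ⟨s, hs, heq⟩ := Finset.exists_mem_eq_sup' ⟨∅, by simp⟩
    (fun s : Finset ι => ∑ i ∈ s, v i) (s := Finset.univ.powerset.filter fun s => s.card ≤ k)
  exact ⟨s, by simpa using hs, heq.symm⟩

lemma topSum_mono (v : ι → ℝ) {k k' : ℕ} (h : k ≤ k') : topSum v k ≤ topSum v k' :=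
  topSum_le fun _ hs => sum_le_topSum v (hs.trans h)

lemma topSum_add_topSum_le_topSum_sumElim (v : ι → ℝ) (w : κ → ℝ) (k₁ k₂ : ℕ) :
    topSum v k₁ + topSum w k₂ ≤ topSum (Sum.elim v w) (k₁ + k₂) := by
  obtain ⟨s₁, hs₁, h₁⟩ := exists_sum_eq_topSum v k₁
  obtain ⟨s₂, hs₂, h₂⟩ := exists_sum_eq_topSum w k₂
  rw [← h₁, ← h₂, ← Finset.sum_sumElim]
  exact sum_le_topSum _ (by rw [Finset.card_disjSum]; omega)

lemma topSum_sumElim_mono {v : ι → ℝ} {w : κ → ℝ} {v' : ι' → ℝ} {w' : κ' → ℝ}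
    (hv : ∀ k, topSum v k ≤ topSum v' k) (hw : ∀ k, topSum w k ≤ topSum w' k) (k : ℕ) :
    topSum (Sum.elim v w) k ≤ topSum (Sum.elim v' w') k := by
  refine topSum_le fun s hs => ?_
  rw [← Finset.toLeft_disjSum_toRight (u := s), Finset.sum_sumElim]
  have hcard : s.toLeft.card + s.toRight.card ≤ k :=
    Finset.card_toLeft_add_card_toRight.trans_le hs
  calc ∑ i ∈ s.toLeft, v i + ∑ j ∈ s.toRight, w j
      ≤ topSum v' s.toLeft.card + topSum w' s.toRight.card :=
        add_le_add ((sum_le_topSum v le_rfl).trans (hv _)) ((sum_le_topSum w le_rfl).trans (hw _))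
    _ ≤ topSum (Sum.elim v' w') (s.toLeft.card + s.toRight.card) :=
        topSum_add_topSum_le_topSum_sumElim _ _ _ _
    _ ≤ topSum (Sum.elim v' w') k := topSum_mono _ hcard

lemma Majorizes.sumElim {v : ι → ℝ} {w : κ → ℝ} {v' : ι' → ℝ} {w' : κ' → ℝ}
    (hv : Majorizes v v') (hw : Majorizes w w') :
    Majorizes (Sum.elim v w) (Sum.elim v' w') :=
  ⟨topSum_sumElim_mono hv.1 hw.1, by simp only [Fintype.sum_sum_type, Sum.elim_inl,
    Sum.elim_inr, hv.2, hw.2]⟩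

end TopSum

section Measurement

variable {m n : ℕ}

lemma star_tensorVec (u : Fin m → ℂ) (v : Fin n → ℂ) :
    star (tensorVec u v) = tensorVec (star u) (star v) := by
  ext; simp [tensorVec]

lemma kronecker_mulVec_tensorVec (A : Matrix (Fin m) (Fin m) ℂ) (B : Matrix (Fin n) (Fin n) ℂ)
    (u : Fin m → ℂ) (v : Fin n → ℂ) :
    (A ⊗ₖ B) *ᵥ tensorVec u v = tensorVec (A *ᵥ u) (B *ᵥ v) := by
  ext ⟨a, b⟩
  simp only [mulVec, dotProduct, tensorVec, kroneckerMap_apply, Fintype.sum_prod_type,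
    Finset.sum_mul_sum]
  exact Finset.sum_congr rfl fun _ _ => Finset.sum_congr rfl fun _ _ => by ring

lemma tensorVec_dotProduct_tensorVec (a c : Fin m → ℂ) (b d : Fin n → ℂ) :
    tensorVec a b ⬝ᵥ tensorVec c d = (a ⬝ᵥ c) * (b ⬝ᵥ d) := by
  simp only [dotProduct, tensorVec, Fintype.sum_prod_type, Finset.sum_mul_sum]
  exact Finset.sum_congr rfl fun _ _ => Finset.sum_congr rfl fun _ _ => by ring

lemma jointDist_kronecker (xA : Fin m → Fin m → ℂ) (xB : Fin n → Fin n → ℂ)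
    {ρA : Matrix (Fin m) (Fin m) ℂ} (hρA : ρA.IsHermitian) (ρB : Matrix (Fin n) (Fin n) ℂ) :
    jointDist xA xB (ρA ⊗ₖ ρB) = fun ij => measDist xA ρA ij.1 * measDist xB ρB ij.2 := by
  ext ⟨i, j⟩
  have him : (star (xA i) ⬝ᵥ ρA *ᵥ xA i).im = 0 := hρA.im_star_dotProduct_mulVec_self (xA i)
  simp only [jointDist, measDist, star_tensorVec, kronecker_mulVec_tensorVec,
    tensorVec_dotProduct_tensorVec, Complex.mul_re, him, zero_mul, sub_zero]

lemma measDist_nonneg (x : Fin n → Fin n → ℂ) {ρ : Matrix (Fin n) (Fin n) ℂ}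
    (hρ : ρ.PosSemidef) (i : Fin n) : 0 ≤ measDist x ρ i :=
  (Complex.nonneg_iff.mp (hρ.dotProduct_mulVec_nonneg (x i))).1

lemma sum_measDist {x : Fin n → Fin n → ℂ} (hx : OrthonormalBasisVecs x)
    (ρ : Matrix (Fin n) (Fin n) ℂ) : ∑ i, measDist x ρ i = ρ.trace.re := by
  let V : Matrix (Fin n) (Fin n) ℂ := of fun k i => x i k
  have hVV : V * Vᴴ = 1 := mul_eq_one_comm.mp <| by
    ext i j
    simpa [mul_apply, V, one_apply, dotProduct] using hx i j
  have htrace : ∑ i, star (x i) ⬝ᵥ (ρ *ᵥ x i) = (Vᴴ * ρ * V).trace := by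
    simp only [trace, diag_apply, mul_apply, conjTranspose_apply, V, dotProduct, mulVec,
      of_apply, Finset.sum_mul, Finset.mul_sum, Pi.star_apply]
    exact Finset.sum_congr rfl fun _ _ => by rw [Finset.sum_comm]; simp only [mul_assoc]
  change ∑ i, (star (x i) ⬝ᵥ (ρ *ᵥ x i)).re = _
  rw [← Complex.re_sum, htrace, trace_mul_comm, ← Matrix.mul_assoc, hVV, Matrix.one_mul]

end Measurement

section Grouping

variable {m n : ℕ}

open scoped Classical in
lemma sum_groupedDist_eq_sum_filter (α : Fin m → ℝ) (β : Fin n → ℝ)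
    (p : Fin m × Fin n → ℝ) (T : Finset (valueSet α β)) :
    ∑ l ∈ T, groupedDist α β p l =
      ∑ ij ∈ Finset.univ.filter (fun ij : Fin m × Fin n =>
        α ij.1 * β ij.2 ∈ T.map (Function.Embedding.subtype _)), p ij := by
  simp only [groupedDist, Finset.sum_filter]
  rw [Finset.sum_comm]
  refine Finset.sum_congr rfl fun ij _ => ?_
  rw [← Finset.sum_ite_eq _ _ fun _ => p ij, Finset.sum_map]
  rfl

lemma sum_groupedDist (α : Fin m → ℝ) (β : Fin n → ℝ) (p : Fin m × Fin n → ℝ) :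
    ∑ l, groupedDist α β p l = ∑ ij, p ij := by
  classical
  rw [sum_groupedDist_eq_sum_filter, Finset.univ_eq_attach, Finset.attach_map_val,
    Finset.filter_true_of_mem]
  exact fun ij _ => Finset.mem_image_of_mem _ (Finset.mem_univ ij)

lemma card_filter_mul_mem_le {α : Fin m → ℝ} (hα : Function.Injective α) {b : ℝ}
    (hb : b ≠ 0) (S : Finset ℝ) :
    (Finset.univ.filter fun i => α i * b ∈ S).card ≤ S.card :=
  Finset.card_le_card_of_injOn (fun i => α i * b) (fun _ hi => (Finset.mem_filter.mp hi).2)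
    fun _ _ _ _ h => hα (mul_right_cancel₀ hb h)

lemma sum_filter_mul_mem_le_topSum {α : Fin m → ℝ} {β : Fin n → ℝ}
    (hα : Function.Injective α) (hβ : ∀ j, β j ≠ 0)
    (pA : Fin m → ℝ) {pB : Fin n → ℝ} (hpB : ∀ j, 0 ≤ pB j) (hpB1 : ∑ j, pB j = 1)
    {S : Finset ℝ} {k : ℕ} (hS : S.card ≤ k) :
    ∑ ij ∈ Finset.univ.filter (fun ij : Fin m × Fin n => α ij.1 * β ij.2 ∈ S),
      pA ij.1 * pB ij.2 ≤ topSum pA k :=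
  calc _ = ∑ j, pB j * ∑ i ∈ Finset.univ.filter (fun i => α i * β j ∈ S), pA i := by
        rw [Finset.sum_filter, Fintype.sum_prod_type_right]
        refine Finset.sum_congr rfl fun j _ => ?_
        rw [Finset.sum_filter, Finset.mul_sum]
        exact Finset.sum_congr rfl fun i _ => by split_ifs <;> ring
    _ ≤ ∑ j, pB j * topSum pA k := Finset.sum_le_sum fun j _ =>
        mul_le_mul_of_nonneg_left
          (sum_le_topSum pA ((card_filter_mul_mem_le hα (hβ j) S).trans hS)) (hpB j)
    _ = topSum pA k := by rw [← Finset.sum_mul, hpB1, one_mul]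

lemma majorizes_groupedDist_mul {α : Fin m → ℝ} {β : Fin n → ℝ}
    (hα : Function.Injective α) (hβ : ∀ j, β j ≠ 0)
    (pA : Fin m → ℝ) {pB : Fin n → ℝ} (hpB : ∀ j, 0 ≤ pB j) (hpB1 : ∑ j, pB j = 1) :
    Majorizes (groupedDist α β fun ij => pA ij.1 * pB ij.2) pA := by
  refine ⟨fun k => topSum_le fun T hT => ?_, ?_⟩
  · rw [sum_groupedDist_eq_sum_filter]
    exact sum_filter_mul_mem_le_topSum hα hβ pA hpB hpB1 ((Finset.card_map _).trans_le hT)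
  · rw [sum_groupedDist, Fintype.sum_prod_type]
    simp only [← Finset.mul_sum, hpB1, mul_one]

end Grouping

theorem direct_sum_grouped_joint_dist_product_state_majorized_general {dA dB : ℕ}
    (α γ : Fin dA → ℝ) (β δ : Fin dB → ℝ)
    (hα : Function.Injective α)
    (hγ : Function.Injective γ)
    (hβ0 : ∀ j, β j ≠ 0)
    (hδ0 : ∀ j, δ j ≠ 0)
    (xA zA : Fin dA → Fin dA → ℂ) (xB zB : Fin dB → Fin dB → ℂ)
    (hxB : OrthonormalBasisVecs xB) (hzB : OrthonormalBasisVecs zB)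
    (ρA : Matrix (Fin dA) (Fin dA) ℂ) (ρB : Matrix (Fin dB) (Fin dB) ℂ)
    (hρA : IsDensityMatrix ρA) (hρB : IsDensityMatrix ρB) :
    Majorizes
      (Sum.elim (groupedDist α β (jointDist xA xB (ρA ⊗ₖ ρB)))
                (groupedDist γ δ (jointDist zA zB (ρA ⊗ₖ ρB))))
      (Sum.elim (measDist xA ρA) (measDist zA ρA)) := by
  have hB : ∀ {x}, OrthonormalBasisVecs x → ∑ j, measDist x ρB j = 1 := fun hx => by
    rw [sum_measDist hx, hρB.2, Complex.one_re]
  rw [jointDist_kronecker _ _ hρA.1.isHermitian, jointDist_kronecker _ _ hρA.1.isHermitian]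
  exact (majorizes_groupedDist_mul hα hβ0 _ (measDist_nonneg xB hρB.1) (hB hxB)).sumElim
    (majorizes_groupedDist_mul hγ hδ0 _ (measDist_nonneg zB hρB.1) (hB hzB))

/-- for product states `ρ_A ⊗ ρ_B`, the direct sum of the grouped joint
distributions of `X_A ⊗ X_B` and `Z_A ⊗ Z_B` is majorized by `p(x^A|ρ_A) ⊕ p(z^A|ρ_A)`. -/
theorem direct_sum_grouped_joint_dist_product_state_majorized {dA dB : ℕ}
    (α γ : Fin dA → ℝ) (β δ : Fin dB → ℝ)
    (hα : Function.Injective α) (hα0 : ∀ i, α i ≠ 0)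
    (hγ : Function.Injective γ) (hγ0 : ∀ i, γ i ≠ 0)
    (hβ : Function.Injective β) (hβ0 : ∀ j, β j ≠ 0)
    (hδ : Function.Injective δ) (hδ0 : ∀ j, δ j ≠ 0)
    (xA zA : Fin dA → Fin dA → ℂ) (xB zB : Fin dB → Fin dB → ℂ)
    (hxA : OrthonormalBasisVecs xA) (hzA : OrthonormalBasisVecs zA)
    (hxB : OrthonormalBasisVecs xB) (hzB : OrthonormalBasisVecs zB)
    (ρA : Matrix (Fin dA) (Fin dA) ℂ) (ρB : Matrix (Fin dB) (Fin dB) ℂ)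
    (hρA : IsDensityMatrix ρA) (hρB : IsDensityMatrix ρB) :
    Majorizes
      (Sum.elim (groupedDist α β (jointDist xA xB (ρA ⊗ₖ ρB)))
                (groupedDist γ δ (jointDist zA zB (ρA ⊗ₖ ρB))))
      (Sum.elim (measDist xA ρA) (measDist zA ρA)) :=
  direct_sum_grouped_joint_dist_product_state_majorized_general α γ β δ hα hγ hβ0 hδ0 xA zA xB zB
    hxB hzB ρA ρB hρA hρB

end
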